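/- arXiv:2312.13658 — 2 statements merged into one kernel-verified Lean document; each statement's English description precedes it below -/
import Mathlib

section
/- Theorem 2 (necessary condition for sample-based i-IOSS): Let the system be sample-based i-IOSS with respect to a sampling set K, with functions β̄ ∈ 𝒦ℒ and γ̄₁, γ̄₂ ∈ 𝒦, and let h be 𝒦-continuous with α_h ∈ 𝒦. Let W ⊆ (ℝ^q)^ℕ, σ₁ ∈ ℒ, and let Ψ be the set of quadruples (x₀₁, x₀₂, w₁, w₂) with w₁, w₂ ∈ W that do not generate a pair of i-ISS trajectories relative to (β̄, γ̄₁, σ₁). Suppose Assumption 2 holds with β = β̄, i.e., there exists T_β̄ ∈ ℕ such that each element of Ψ admits a time t_ψ ≤ T_β̄ with |Δx(t_ψ)| > β̄(|Δx₀|, t_ψ). Then there exist γ_w, γ_h ∈ 𝒦 and a finite time t* ∈ ℕ (one may take γ_w(s) = α_h(2γ̄₁(s)), γ_h(s) = α_h(2γ̄₂(s)), t* = T_β̄) such that for all (x₀₁, x₀₂, w₁, w₂) ∈ Ψ, every K_i ∈ K, and all t ≥ t*: |Δh(Δx(t))| ≤ γ_h(sup_{τ∈K_i, τ<t} |Δh(Δx(τ))|)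 ⊕ γ_w(sup_{0≤τ<t} |Δw(τ)|). -/
open Set Filter

noncomputable section

/-- `Vec m` is `ℝ^m` with the Euclidean norm. -/
abbrev Vec (m : ℕ) := EuclideanSpace ℝ (Fin m)

/-- A function `φ : ℝ≥0 → ℝ≥0` is of class 𝒦 (modeled on `ℝ`, restricted to `[0,∞)`):
continuous, strictly increasing and `φ 0 = 0`. -/
def IsClassK (φ : ℝ → ℝ) : Prop :=
  ContinuousOn φ (Ici 0) ∧ StrictMonoOn φ (Ici 0) ∧ φ 0 = 0

/-- A function `σ : ℕ → ℝ≥0` is of class ℒ: non-increasing with limit `0`. -/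
def IsClassL (σ : ℕ → ℝ) : Prop :=
  (∀ t, 0 ≤ σ t) ∧ Antitone σ ∧ Tendsto σ atTop (nhds 0)

/-- Class 𝒦ℒ. -/
def IsClassKL (β : ℝ → ℕ → ℝ) : Prop :=
  (∀ t, IsClassK fun s => β s t) ∧ ∀ s, 0 ≤ s → IsClassL fun t => β s t

/-- Solution map of `x(t+1) = f(x(t), w(t))`, `x(0) = x₀`. -/
def sol {n q : ℕ} (f : Vec n → Vec q → Vec n) (x0 : Vec n) (w : ℕ → Vec q) : ℕ → Vec n
  | 0 => x0
  | t + 1 => f (sol f x0 w t) (w t)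

/-- `|Δx(t)|`. -/
def nDx {n q : ℕ} (f : Vec n → Vec q → Vec n) (x01 x02 : Vec n) (w1 w2 : ℕ → Vec q)
    (t : ℕ) : ℝ :=
  ‖sol f x01 w1 t - sol f x02 w2 t‖

/-- `|Δh(Δx(t))|`. -/
def nDy {n q p : ℕ} (f : Vec n → Vec q → Vec n) (h : Vec n → Vec p)
    (x01 x02 : Vec n) (w1 w2 : ℕ → Vec q) (t : ℕ) : ℝ :=
  ‖h (sol f x01 w1 t) - h (sol f x02 w2 t)‖

/-- `|Δw(t)|`. -/
def nDw {q : ℕ} (w1 w2 : ℕ → Vec q) (t : ℕ) : ℝ := ‖w1 t - w2 t‖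

/-- `sup_{0 ≤ τ < t} g τ` (empty sup is `0` by the `Real.sSup` convention). -/
def supLt (t : ℕ) (g : ℕ → ℝ) : ℝ := sSup (g '' {τ | τ < t})

/-- `sup_{τ ∈ S, τ < t} g τ`. -/
def supMem (S : Set ℕ) (t : ℕ) (g : ℕ → ℝ) : ℝ := sSup (g '' {τ | τ ∈ S ∧ τ < t})

/-- Time-discounted max over `0 ≤ τ < t` of `β (g τ) (t - τ - 1)`. -/
def dmaxLt (t : ℕ) (g : ℕ → ℝ) (β : ℝ → ℕ → ℝ) : ℝ :=
  sSup ((fun τ => β (g τ) (t - τ - 1)) '' {τ | τ < t})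

/-- Time-discounted max over `τ ∈ S, τ < t` of `β (g τ) (t - τ - 1)`. -/
def dmaxMem (S : Set ℕ) (t : ℕ) (g : ℕ → ℝ) (β : ℝ → ℕ → ℝ) : ℝ :=
  sSup ((fun τ => β (g τ) (t - τ - 1)) '' {τ | τ ∈ S ∧ τ < t})

/-- `t^i_j = δ_i + ⋯ + δ_{i+j-1}` (the sequence `δ` is 1-based; `δ 0` is unused). -/
def sampT (δ : ℕ → ℕ) (i j : ℕ) : ℕ := ∑ r ∈ Finset.range j, δ (i + r)

/-- The sampling set `K_i = {t^i_j : j ≥ 1}`. -/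
def sampSet (δ : ℕ → ℕ) (i : ℕ) : Set ℕ := {m | ∃ j, 1 ≤ j ∧ m = sampT δ i j}

/-- The i-IOSS bound with given comparison functions. -/
def iIOSSBound {n q p : ℕ} (f : Vec n → Vec q → Vec n) (h : Vec n → Vec p)
    (β : ℝ → ℕ → ℝ) (γ1 γ2 : ℝ → ℝ) : Prop :=
  ∀ x01 x02 w1 w2 t,
    nDx f x01 x02 w1 w2 t ≤
      max (β ‖x01 - x02‖ t)
        (max (γ1 (supLt t (nDw w1 w2))) (γ2 (supLt t (nDy f h x01 x02 w1 w2))))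

/-- The sample-based i-IOSS bound w.r.t. the sampling set generated by `δ`. -/
def sampledIOSSBound {n q p : ℕ} (f : Vec n → Vec q → Vec n) (h : Vec n → Vec p)
    (δ : ℕ → ℕ) (β : ℝ → ℕ → ℝ) (γ1 γ2 : ℝ → ℝ) : Prop :=
  ∀ i, 1 ≤ i → ∀ x01 x02 w1 w2 t,
    nDx f x01 x02 w1 w2 t ≤
      max (β ‖x01 - x02‖ t)
        (max (γ1 (supLt t (nDw w1 w2)))
             (γ2 (supMem (sampSet δ i) t (nDy f h x01 x02 w1 w2))))

/-- The sample-based i-IOSS bound on an input set `W`. -/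
def sampledIOSSBoundOn {n q p : ℕ} (f : Vec n → Vec q → Vec n) (h : Vec n → Vec p)
    (W : Set (ℕ → Vec q)) (δ : ℕ → ℕ) (β : ℝ → ℕ → ℝ) (γ1 γ2 : ℝ → ℝ) : Prop :=
  ∀ i, 1 ≤ i → ∀ x01 x02, ∀ w1 ∈ W, ∀ w2 ∈ W, ∀ t,
    nDx f x01 x02 w1 w2 t ≤
      max (β ‖x01 - x02‖ t)
        (max (γ1 (supLt t (nDw w1 w2)))
             (γ2 (supMem (sampSet δ i) t (nDy f h x01 x02 w1 w2))))

/-- The sample-based time-discounted i-IOSS bound. -/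
def sampledTDBound {n q p : ℕ} (f : Vec n → Vec q → Vec n) (h : Vec n → Vec p)
    (δ : ℕ → ℕ) (βx βu βy : ℝ → ℕ → ℝ) : Prop :=
  ∀ i, 1 ≤ i → ∀ x01 x02 w1 w2 t,
    nDx f x01 x02 w1 w2 t ≤
      max (βx ‖x01 - x02‖ t)
        (max (dmaxLt t (nDw w1 w2) βu)
             (dmaxMem (sampSet δ i) t (nDy f h x01 x02 w1 w2) βy))

/-- The sample-based time-discounted i-IOSS bound on an input set `W`. -/
def sampledTDBoundOn {n q p : ℕ} (f : Vec n → Vec q → Vec n) (h : Vec n → Vec p)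
    (W : Set (ℕ → Vec q)) (δ : ℕ → ℕ) (βx βu βy : ℝ → ℕ → ℝ) : Prop :=
  ∀ i, 1 ≤ i → ∀ x01 x02, ∀ w1 ∈ W, ∀ w2 ∈ W, ∀ t,
    nDx f x01 x02 w1 w2 t ≤
      max (βx ‖x01 - x02‖ t)
        (max (dmaxLt t (nDw w1 w2) βu)
             (dmaxMem (sampSet δ i) t (nDy f h x01 x02 w1 w2) βy))

/-- `(x₀₁, x₀₂, w₁, w₂)` generates a pair of i-ISS trajectories relative to `(β, γ1, σ1)`. -/
def pairISS {n q : ℕ} (f : Vec n → Vec q → Vec n) (β : ℝ → ℕ → ℝ) (γ1 : ℝ → ℝ)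
    (σ1 : ℕ → ℝ) (x01 x02 : Vec n) (w1 w2 : ℕ → Vec q) : Prop :=
  ∀ t, nDx f x01 x02 w1 w2 t ≤
    max (β ‖x01 - x02‖ t)
      (sSup ((fun τ => γ1 (nDw w1 w2 τ) * σ1 (t - τ - 1)) '' {τ | τ < t}))

/-! Along a pair in `Ψ` the decay term `β̄(|Δx₀|, t)` is beaten by the gain terms already at
some `t_ψ ≤ T_β̄`. Since `β̄` decreases in `t` and the gain terms (built from running suprema)
increase, the decay term stays dominated for all `t ≥ T_β̄`, so there `|Δx(t)|` is bounded by the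
gain terms alone; composing with `α_h` turns this into the output bound. -/

namespace IsClassK

variable {φ : ℝ → ℝ}

lemma monotoneOn (hφ : IsClassK φ) : MonotoneOn φ (Ici 0) :=
  hφ.2.1.monotoneOn

lemma nonneg (hφ : IsClassK φ) {s : ℝ} (hs : 0 ≤ s) : 0 ≤ φ s := by
  simpa [hφ.2.2] using hφ.monotoneOn self_mem_Ici hs hs

lemma comp {ψ : ℝ → ℝ} (hφ : IsClassK φ) (hψ : IsClassK ψ) : IsClassK fun s => φ (ψ s) := by
  have hmaps : MapsTo ψ (Ici 0) (Ici 0) := fun s hs => hψ.nonneg hs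
  refine ⟨hφ.1.comp hψ.1 hmaps, fun a ha b hb hab => ?_, by simp [hψ.2.2, hφ.2.2]⟩
  exact hφ.2.1 (hmaps ha) (hmaps hb) (hψ.2.1 ha hb hab)

lemma map_max (hφ : IsClassK φ) {a b : ℝ} (ha : 0 ≤ a) (hb : 0 ≤ b) :
    φ (max a b) = max (φ a) (φ b) :=
  hφ.monotoneOn.map_max ha hb

lemma monotone_comp (hφ : IsClassK φ) {u : ℕ → ℝ} (hu : Monotone u) (hu0 : ∀ t, 0 ≤ u t) :
    Monotone fun t => φ (u t) :=
  fun _ _ hst => hφ.monotoneOn (hu0 _) (hu0 _) (hu hst)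

end IsClassK

lemma sSup_image_le_of_subset {g : ℕ → ℝ} (hg : ∀ τ, 0 ≤ g τ) {s t : Set ℕ} (hst : s ⊆ t)
    (ht : t.Finite) : sSup (g '' s) ≤ sSup (g '' t) := by
  refine Real.sSup_le ?_ (Real.sSup_nonneg (by rintro _ ⟨τ, -, rfl⟩; exact hg τ))
  rintro _ ⟨τ, hτ, rfl⟩
  exact le_csSup (ht.image g).bddAbove ⟨τ, hst hτ, rfl⟩

lemma supLt_nonneg {g : ℕ → ℝ} (hg : ∀ τ, 0 ≤ g τ) (t : ℕ) : 0 ≤ supLt t g :=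
  Real.sSup_nonneg (by rintro _ ⟨τ, -, rfl⟩; exact hg τ)

lemma supMem_nonneg {g : ℕ → ℝ} (hg : ∀ τ, 0 ≤ g τ) (S : Set ℕ) (t : ℕ) :
    0 ≤ supMem S t g :=
  Real.sSup_nonneg (by rintro _ ⟨τ, -, rfl⟩; exact hg τ)

lemma monotone_supLt {g : ℕ → ℝ} (hg : ∀ τ, 0 ≤ g τ) : Monotone fun t => supLt t g :=
  fun _ t₂ hle => sSup_image_le_of_subset hg (fun _ hτ => lt_of_lt_of_le hτ hle)
    (Set.finite_lt_nat t₂)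

lemma monotone_supMem {g : ℕ → ℝ} (hg : ∀ τ, 0 ≤ g τ) (S : Set ℕ) :
    Monotone fun t => supMem S t g :=
  fun _ t₂ hle => sSup_image_le_of_subset hg (fun _ hτ => ⟨hτ.1, lt_of_lt_of_le hτ.2 hle⟩)
    ((Set.finite_lt_nat t₂).subset fun _ hτ => hτ.2)

lemma le_of_le_max_of_antitone_of_lt {x b c : ℕ → ℝ} (hx : ∀ t, x t ≤ max (b t) (c t))
    (hb : Antitone b) (hc : Monotone c) {s t : ℕ} (hs : b s < x s) (hst : s ≤ t) :
    x t ≤ c t := by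
  have hbc : b s < c s := (lt_max_iff.1 (hs.trans_le (hx s))).resolve_left (lt_irrefl _)
  exact (hx t).trans (max_le (((hb hst).trans hbc.le).trans (hc hst)) le_rfl)

lemma monotone_sampledIOSS_gain {n q p : ℕ} (f : Vec n → Vec q → Vec n) (h : Vec n → Vec p)
    (S : Set ℕ) {γ1 γ2 : ℝ → ℝ} (hγ1 : IsClassK γ1) (hγ2 : IsClassK γ2)
    (x01 x02 : Vec n) (w1 w2 : ℕ → Vec q) :
    Monotone fun t =>
      max (γ1 (supLt t (nDw w1 w2))) (γ2 (supMem S t (nDy f h x01 x02 w1 w2))) := by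
  have hw : ∀ τ, 0 ≤ nDw w1 w2 τ := fun _ => norm_nonneg _
  have hy : ∀ τ, 0 ≤ nDy f h x01 x02 w1 w2 τ := fun _ => norm_nonneg _
  exact (hγ1.monotone_comp (monotone_supLt hw) (supLt_nonneg hw)).sup
    (hγ2.monotone_comp (monotone_supMem hy S) (supMem_nonneg hy S))

theorem theorem2_necessary_sample_based_iIOSS_general {n q p : ℕ}
    (f : Vec n → Vec q → Vec n) (h : Vec n → Vec p)
    (δ : ℕ → ℕ)
    (βb : ℝ → ℕ → ℝ) (γb1 γb2 : ℝ → ℝ)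
    (hβb : IsClassKL βb) (hγb1 : IsClassK γb1) (hγb2 : IsClassK γb2)
    (hsb : sampledIOSSBound f h δ βb γb1 γb2)
    (αh : ℝ → ℝ) (hαh : IsClassK αh)
    (hKcont : ∀ x1 x2 : Vec n, ‖h x1 - h x2‖ ≤ αh ‖x1 - x2‖)
    (W : Set (ℕ → Vec q)) (σ1 : ℕ → ℝ)
    (Tβ : ℕ)
    (hass2 : ∀ (x01 x02 : Vec n) (w1 w2 : ℕ → Vec q), w1 ∈ W → w2 ∈ W →
        ¬ pairISS f βb γb1 σ1 x01 x02 w1 w2 →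
        ∃ tψ ≤ Tβ, βb ‖x01 - x02‖ tψ < nDx f x01 x02 w1 w2 tψ) :
    ∃ (γw γh : ℝ → ℝ) (tstar : ℕ), IsClassK γw ∧ IsClassK γh ∧
      ∀ (x01 x02 : Vec n) (w1 w2 : ℕ → Vec q), w1 ∈ W → w2 ∈ W →
        ¬ pairISS f βb γb1 σ1 x01 x02 w1 w2 →
        ∀ i, 1 ≤ i → ∀ t, tstar ≤ t →
          nDy f h x01 x02 w1 w2 t ≤
            max (γh (supMem (sampSet δ i) t (nDy f h x01 x02 w1 w2)))
                (γw (supLt t (nDw w1 w2))) := by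
  refine ⟨fun s => αh (γb1 s), fun s => αh (γb2 s), Tβ, hαh.comp hγb1, hαh.comp hγb2, ?_⟩
  intro x01 x02 w1 w2 hw1 hw2 hnot i hi t ht
  obtain ⟨tψ, htψ, hlt⟩ := hass2 x01 x02 w1 w2 hw1 hw2 hnot
  set A := supLt t (nDw w1 w2)
  set B := supMem (sampSet δ i) t (nDy f h x01 x02 w1 w2)
  have hA : 0 ≤ A := supLt_nonneg (fun _ => norm_nonneg _) t
  have hB : 0 ≤ B := supMem_nonneg (fun _ => norm_nonneg _) _ t
  have hx : nDx f x01 x02 w1 w2 t ≤ max (γb1 A) (γb2 B) :=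
    le_of_le_max_of_antitone_of_lt (hsb i hi x01 x02 w1 w2) (hβb.2 _ (norm_nonneg _)).2.1
      (monotone_sampledIOSS_gain f h _ hγb1 hγb2 x01 x02 w1 w2) hlt (htψ.trans ht)
  calc nDy f h x01 x02 w1 w2 t ≤ αh (nDx f x01 x02 w1 w2 t) := hKcont _ _
    _ ≤ αh (max (γb1 A) (γb2 B)) :=
      hαh.monotoneOn (norm_nonneg _) ((hγb1.nonneg hA).trans (le_max_left _ _)) hx
    _ = max (αh (γb2 B)) (αh (γb1 A)) := by
      rw [hαh.map_max (hγb1.nonneg hA) (hγb2.nonneg hB), max_comm]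

/-- **Theorem 2** (necessary condition for sample-based i-IOSS). -/
theorem theorem2_necessary_sample_based_iIOSS {n q p : ℕ}
    (f : Vec n → Vec q → Vec n) (h : Vec n → Vec p)
    (δ : ℕ → ℕ) (δmax : ℕ) (hδ : ∀ i, 1 ≤ i → δ i ≤ δmax)
    (βb : ℝ → ℕ → ℝ) (γb1 γb2 : ℝ → ℝ)
    (hβb : IsClassKL βb) (hγb1 : IsClassK γb1) (hγb2 : IsClassK γb2)
    (hsb : sampledIOSSBound f h δ βb γb1 γb2)
    (αh : ℝ → ℝ) (hαh : IsClassK αh)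
    (hKcont : ∀ x1 x2 : Vec n, ‖h x1 - h x2‖ ≤ αh ‖x1 - x2‖)
    (W : Set (ℕ → Vec q)) (σ1 : ℕ → ℝ) (hσ1 : IsClassL σ1)
    (Tβ : ℕ)
    (hass2 : ∀ (x01 x02 : Vec n) (w1 w2 : ℕ → Vec q), w1 ∈ W → w2 ∈ W →
        ¬ pairISS f βb γb1 σ1 x01 x02 w1 w2 →
        ∃ tψ ≤ Tβ, βb ‖x01 - x02‖ tψ < nDx f x01 x02 w1 w2 tψ) :
    ∃ (γw γh : ℝ → ℝ) (tstar : ℕ), IsClassK γw ∧ IsClassK γh ∧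
      ∀ (x01 x02 : Vec n) (w1 w2 : ℕ → Vec q), w1 ∈ W → w2 ∈ W →
        ¬ pairISS f βb γb1 σ1 x01 x02 w1 w2 →
        ∀ i, 1 ≤ i → ∀ t, tstar ≤ t →
          nDy f h x01 x02 w1 w2 t ≤
            max (γh (supMem (sampSet δ i) t (nDy f h x01 x02 w1 w2)))
                (γw (supLt t (nDw w1 w2))) :=
  theorem2_necessary_sample_based_iIOSS_general f h δ βb γb1 γb2 hβb hγb1 hγb2 hsb αh hαh hKcont W
    σ1 Tβ hass2
end
end

section
/- Time-discounted output bound from the measured outputs (equation (35) of the paper): Let K be a sampling set built from Δ = (δ₁, δ₂, …) with 1 ≤ δ_i ≤ δ_max for all i. Suppose there exist γ_w, γ_h ∈ 𝒦 and t* ∈ ℕ with t* ≥ δ_max + 1 such that for all initial conditions x₀₁, x₀₂, all input sequences w₁, w₂, every K_i ∈ K, and all t ≥ t*: |Δh(Δx(t))| ≤ γ_h(sup_{τ∈K_i, τ<t} |Δh(Δx(τ))|) ⊕ γ_w(sup_{0≤τ<t} |Δw(τ)|). Let σ : ℕ → ℝ_{>0} be non-increasing with limit 0 and define β_w(s, r)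 = γ_w(s)·σ(r)/σ(2t*−1) and β_h(s, r) = γ_h(s)·σ(r)/σ(2t*−1). Then for all initial conditions, all input sequences, every K_i ∈ K, and all t ≥ t*: |Δh(Δx(t))| ≤ max_{0≤τ<t} β_w(|Δw(τ)|, t−τ−1) ⊕ max_{τ∈K_i, τ<t} β_h(|Δh(Δx(τ))|, t−τ−1). -/
open Set Filter

noncomputable section

/-!
Given `t ≥ t*`, let `a` be the last instant of `{0} ∪ K_i` with `a ≤ t - t*`, say `a = t^i_j`.
Gaps in `K_i` are at most `δmax`, so `s = t - a` satisfies `t* ≤ s < t* + δmax ≤ 2 t*`.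
Restarting both trajectories at time `a` and applying the hypothesis at time `s` with the sampling
set `K_{i+j}`, whose shift by `a` lies in `K_i`, bounds `|Δh(t)|` by `γ_h` and `γ_w` of values at
times `a + τ` with `τ < s`. For those times `t - (a + τ) - 1 < 2 t* - 1`, so the discount factor
`σ(t - (a + τ) - 1) / σ(2 t* - 1)` is at least `1`.
-/

lemma sol_add {n q : ℕ} (f : Vec n → Vec q → Vec n) (x0 : Vec n) (w : ℕ → Vec q) (a τ : ℕ) :
    sol f (sol f x0 w a) (fun k => w (a + k)) τ = sol f x0 w (a + τ) := by
  induction τ with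
  | zero => rfl
  | succ τ ih => simp only [sol, ih]; rfl

lemma nDy_sol_add {n q p : ℕ} (f : Vec n → Vec q → Vec n) (h : Vec n → Vec p)
    (x01 x02 : Vec n) (w1 w2 : ℕ → Vec q) (a : ℕ) :
    nDy f h (sol f x01 w1 a) (sol f x02 w2 a) (fun k => w1 (a + k)) (fun k => w2 (a + k)) =
      fun τ => nDy f h x01 x02 w1 w2 (a + τ) := by
  funext τ
  simp only [nDy, sol_add]

lemma nDw_add {q : ℕ} (w1 w2 : ℕ → Vec q) (a : ℕ) :
    nDw (fun k => w1 (a + k)) (fun k => w2 (a + k)) = fun τ => nDw w1 w2 (a + τ) :=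
  rfl

section Sampling

variable (δ : ℕ → ℕ)

lemma sampT_succ (i j : ℕ) : sampT δ i (j + 1) = sampT δ i j + δ (i + j) :=
  Finset.sum_range_succ _ _

lemma sampT_add (i j k : ℕ) : sampT δ i (j + k) = sampT δ i j + sampT δ (i + j) k := by
  simp only [sampT, Finset.sum_range_add, Nat.add_assoc]

lemma self_mem_sampSet (i : ℕ) : δ i ∈ sampSet δ i :=
  ⟨1, le_rfl, by simp [sampT]⟩

lemma sampT_add_mem_sampSet {i j τ : ℕ} (hτ : τ ∈ sampSet δ (i + j)) :
    sampT δ i j + τ ∈ sampSet δ i := by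
  obtain ⟨k, hk, rfl⟩ := hτ
  exact ⟨j + k, by omega, (sampT_add δ i j k).symm⟩

lemma exists_sampT_le_lt_succ {i : ℕ} (hδ : ∀ k, 1 ≤ δ (i + k)) (m : ℕ) :
    ∃ j, sampT δ i j ≤ m ∧ m < sampT δ i (j + 1) := by
  induction m with
  | zero => exact ⟨0, le_rfl, by
    simp only [zero_add, sampT, Finset.range_one, Finset.sum_singleton]
    exact hδ 0⟩
  | succ m ih =>
    obtain ⟨j, hle, hlt⟩ := ih
    by_cases hm : m + 1 < sampT δ i (j + 1)
    · exact ⟨j, by omega, hm⟩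
    · refine ⟨j + 1, by omega, ?_⟩
      have := hδ (j + 1)
      rw [sampT_succ δ i (j + 1)]
      omega

end Sampling

lemma supLt_eq_supMem_univ (t : ℕ) (g : ℕ → ℝ) : supLt t g = supMem univ t g := by
  simp [supLt, supMem]

lemma dmaxLt_eq_dmaxMem_univ (t : ℕ) (g : ℕ → ℝ) (β : ℝ → ℕ → ℝ) :
    dmaxLt t g β = dmaxMem univ t g β := by
  simp [dmaxLt, dmaxMem]

/-- The supremum on the left is attained, the index set being finite and nonempty. -/
lemma le_dmaxMem_of_supMem_shift {S S' : Set ℕ} {a s : ℕ} {g : ℕ → ℝ} {φ : ℝ → ℝ}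
    {β : ℝ → ℕ → ℝ} (hne : ∃ τ ∈ S', τ < s) (hshift : ∀ τ ∈ S', a + τ ∈ S)
    (hβ : ∀ τ < s, φ (g (a + τ)) ≤ β (g (a + τ)) (s - τ - 1)) :
    φ (supMem S' s fun τ => g (a + τ)) ≤ dmaxMem S (a + s) g β := by
  obtain ⟨τ₀, hτ₀, hτ₀s⟩ := hne
  have hfin : {τ | τ ∈ S' ∧ τ < s}.Finite := (finite_Iio s).subset fun _ hτ => hτ.2
  have hne' : {τ | τ ∈ S' ∧ τ < s}.Nonempty := ⟨τ₀, hτ₀, hτ₀s⟩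
  obtain ⟨τ, ⟨hτS', hτs⟩, hτmax⟩ := (hne'.image fun τ => g (a + τ)).csSup_mem (hfin.image _)
  have hbdd : BddAbove ((fun k => β (g k) (a + s - k - 1)) '' {k | k ∈ S ∧ k < a + s}) :=
    (((finite_Iio (a + s)).subset fun _ hk => hk.2).image _).bddAbove
  have hdiscount : a + s - (a + τ) - 1 = s - τ - 1 := by omega
  calc φ (supMem S' s fun τ => g (a + τ)) = φ (g (a + τ)) := by rw [supMem, ← hτmax]
    _ ≤ β (g (a + τ)) (a + s - (a + τ) - 1) := hdiscount ▸ hβ τ hτs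
    _ ≤ dmaxMem S (a + s) g β :=
      le_csSup hbdd ⟨a + τ, ⟨hshift τ hτS', by omega⟩, rfl⟩

lemma IsClassK.nonneg_s11 {γ : ℝ → ℝ} (hγ : IsClassK γ) {x : ℝ} (hx : 0 ≤ x) : 0 ≤ γ x :=
  hγ.2.2 ▸ hγ.2.1.monotoneOn self_mem_Ici hx hx

lemma le_mul_div_of_antitone {σ : ℕ → ℝ} (hσpos : ∀ r, 0 < σ r) (hσ : Antitone σ) {y : ℝ}
    (hy : 0 ≤ y) {k c : ℕ} (hkc : k ≤ c) : y ≤ y * σ k / σ c := by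
  rw [mul_div_assoc]
  exact le_mul_of_one_le_right hy ((one_le_div (hσpos c)).2 (hσ hkc))

/-- Time-discounted output bound from the measured outputs
(equation (35) of the paper). -/
theorem td_output_bound {n q p : ℕ}
    (f : Vec n → Vec q → Vec n) (h : Vec n → Vec p)
    (δ : ℕ → ℕ) (δmax : ℕ) (hδ : ∀ i, 1 ≤ i → 1 ≤ δ i ∧ δ i ≤ δmax)
    (γw γh : ℝ → ℝ) (hγw : IsClassK γw) (hγh : IsClassK γh)
    (tstar : ℕ) (hts : δmax + 1 ≤ tstar)
    (hcond : ∀ (x01 x02 : Vec n) (w1 w2 : ℕ → Vec q) (i : ℕ), 1 ≤ i →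
        ∀ t, tstar ≤ t →
          nDy f h x01 x02 w1 w2 t ≤
            max (γh (supMem (sampSet δ i) t (nDy f h x01 x02 w1 w2)))
                (γw (supLt t (nDw w1 w2))))
    (σ : ℕ → ℝ)
    (hσ : (∀ r, 0 < σ r) ∧ Antitone σ ∧ Tendsto σ atTop (nhds 0)) :
    ∀ (x01 x02 : Vec n) (w1 w2 : ℕ → Vec q) (i : ℕ), 1 ≤ i →
      ∀ t, tstar ≤ t →
        nDy f h x01 x02 w1 w2 t ≤
          max (dmaxLt t (nDw w1 w2) (fun s r => γw s * σ r / σ (2 * tstar - 1)))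
              (dmaxMem (sampSet δ i) t (nDy f h x01 x02 w1 w2)
                (fun s r => γh s * σ r / σ (2 * tstar - 1))) := by
  obtain ⟨hσpos, hσanti, -⟩ := hσ
  intro x01 x02 w1 w2 i hi t ht
  obtain ⟨j, hj_le, hj_lt⟩ :=
    exists_sampT_le_lt_succ δ (fun k => (hδ (i + k) (by omega)).1) (t - tstar)
  have hgap := (hδ (i + j) (by omega)).2
  rw [sampT_succ] at hj_lt
  obtain ⟨s, rfl⟩ : ∃ s, t = sampT δ i j + s := ⟨t - sampT δ i j, by omega⟩
  have hs : tstar ≤ s := by omega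
  have hdiscount : ∀ τ < s, s - τ - 1 ≤ 2 * tstar - 1 := fun τ _ => by omega
  have hrestart := hcond (sol f x01 w1 (sampT δ i j)) (sol f x02 w2 (sampT δ i j))
    (fun k => w1 (sampT δ i j + k)) (fun k => w2 (sampT δ i j + k)) (i + j) (by omega) s hs
  simp only [nDy_sol_add, nDw_add] at hrestart
  refine hrestart.trans (max_le (le_max_of_le_right ?_) (le_max_of_le_left ?_))
  · refine le_dmaxMem_of_supMem_shift ⟨δ (i + j), self_mem_sampSet δ (i + j), by omega⟩
      (fun τ hτ => sampT_add_mem_sampSet δ hτ) fun τ hτ => ?_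
    exact le_mul_div_of_antitone hσpos hσanti (hγh.nonneg_s11 (norm_nonneg _)) (hdiscount τ hτ)
  · rw [supLt_eq_supMem_univ, dmaxLt_eq_dmaxMem_univ]
    refine le_dmaxMem_of_supMem_shift ⟨0, mem_univ 0, by omega⟩ (fun _ _ => mem_univ _)
      fun τ hτ => ?_
    exact le_mul_div_of_antitone hσpos hσanti (hγw.nonneg_s11 (norm_nonneg _)) (hdiscount τ hτ)
end
end
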